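/- Pointwise estimate of the full gradient of a vector field by its tangential derivatives, curl and divergence (Lemma 5.1, estimate (5.1)): For every n ≥ 2 there is a constant C = C(n) with the following property. Let β = (β₁,…,β_n) be a differentiable ℝⁿ-valued function on an open subset of ℝⁿ, let Ñ be a vector with |Ñ| ≤ 1 and set q^{kl} = δ^{kl} − Ñ^k Ñ^l. Then at every point, |∂β|² ≤ C (Σ_{i,j,k,l} q^{kl} δ^{ij} ∂_k β_i ∂_l β_j + |curl β|² + |div β|²), where |∂β|² = Σ_{i,j} (∂_i β_j)², curl β_{ij} = ∂_i β_j − ∂_j β_i, |curl β|² = Σ_{i,j}(∂_i β_j − ∂_j β_i)², and div β = Σ_k ∂_k β_k. -/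

import Mathlib

open scoped BigOperators
open Set Matrix

noncomputable section

abbrev E' (n : ℕ) := EuclideanSpace ℝ (Fin n)

def Ball (n : ℕ) : Set (E' n) := Metric.closedBall 0 1

def Sphere' (n : ℕ) : Set (E' n) := Metric.sphere 0 1

variable {n : ℕ} {F : Type*} [NormedAddCommGroup F] [NormedSpace ℝ F]

/-- Partial derivative `∂u/∂y^a`. -/
def pd (a : Fin n) (u : E' n → ℝ) (y : E' n) : ℝ :=
  fderiv ℝ u y (EuclideanSpace.single a 1)

/-- Jacobian matrix `∂x^i/∂y^a`. -/
def jacM (x : E' n → E' n) (y : E' n) : Matrix (Fin n) (Fin n) ℝ :=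
  Matrix.of fun i a => pd a (fun z => x z i) y

/-- Metric `g_{ab} = Σ_i (∂x^i/∂y^a)(∂x^i/∂y^b)`. -/
def gMet (x : E' n → E' n) (y : E' n) : Matrix (Fin n) (Fin n) ℝ :=
  (jacM x y)ᵀ * jacM x y

def kappa (x : E' n → E' n) (y : E' n) : ℝ := (jacM x y).det

/-- Eulerian derivative `∂_i u = (∂y^a/∂x^i) ∂_a u`. -/
def epd (x : E' n → E' n) (i : Fin n) (u : E' n → ℝ) (y : E' n) : ℝ :=
  ∑ a, (jacM x y)⁻¹ a i * pd a u y

/-- Laplace–Beltrami operator `Δq = κ⁻¹ ∂_a (κ g^{ab} ∂_b q)`. -/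
def lapl (x : E' n → E' n) (q : E' n → ℝ) (y : E' n) : ℝ :=
  (kappa x y)⁻¹ *
    ∑ a, pd a (fun z => kappa x z * ∑ b, (gMet x z)⁻¹ a b * pd b q z) y

/-- Lagrangian divergence `div W = κ⁻¹ ∂_a (κ W^a)`. -/
def divL (x : E' n → E' n) (W : E' n → Fin n → ℝ) (y : E' n) : ℝ :=
  (kappa x y)⁻¹ * ∑ a, pd a (fun z => kappa x z * W z a) y

/-- Eulerian divergence `div u = ∂_k u^k`. -/
def divE (x : E' n → E' n) (u : E' n → Fin n → ℝ) (y : E' n) : ℝ :=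
  ∑ k, epd x k (fun z => u z k) y

/-- Eulerian curl `curl u_{ij} = ∂_i u_j − ∂_j u_i`. -/
def curlE (x : E' n → E' n) (u : E' n → Fin n → ℝ) (i j : Fin n) (y : E' n) : ℝ :=
  epd x i (fun z => u z j) y - epd x j (fun z => u z i) y

/-- Exterior unit (with respect to `g`) normal derivative on the unit sphere. -/
def gradN (x : E' n → E' n) (p : E' n → ℝ) (y : E' n) : ℝ :=
  (∑ a, ∑ b, (gMet x y)⁻¹ a b * y b * pd a p y) /
    Real.sqrt (∑ a, ∑ b, (gMet x y)⁻¹ a b * y a * y b)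

/-- Coordinate condition `|∂x/∂y|² + |∂y/∂x|² ≤ c₁²`. -/
def coordCond (x : E' n → E' n) (c₁ : ℝ) (y : E' n) : Prop :=
  (∑ i, ∑ a, (jacM x y i a) ^ 2) + (∑ i, ∑ a, ((jacM x y)⁻¹ i a) ^ 2) ≤ c₁ ^ 2

/-- Physical condition `∇_N p ≤ −c₀` on the boundary. -/
def physCond (x : E' n → E' n) (p : E' n → ℝ) (c₀ : ℝ) : Prop :=
  ∀ y ∈ Sphere' n, gradN x p y ≤ -c₀

/-- Material (time) derivative at fixed `y`. -/
def Dt (u : ℝ → E' n → F) : ℝ → E' n → F := fun t y => deriv (fun s => u s y) t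

/-- Iterated time derivative. -/
def Dts (k : ℕ) (u : ℝ → E' n → F) : ℝ → E' n → F := Dt^[k] u

/-- Joint space-time smoothness. -/
def SmoothST (u : ℝ → E' n → F) : Prop :=
  ContDiff ℝ (⊤ : ℕ∞) fun p : ℝ × E' n => u p.1 p.2

/-- `L²` Sobolev norm of order `r` on the unit ball. -/
def sobNorm (r : ℕ) (u : E' n → F) : ℝ :=
  ∑ j ∈ Finset.range (r + 1), (∫ y in Ball n, ‖iteratedFDeriv ℝ j u y‖ ^ 2) ^ ((1:ℝ)/2)

/-- `C^k` supremum norm on the unit ball. -/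
def ckNorm (k : ℕ) (u : E' n → F) : ℝ :=
  ∑ j ∈ Finset.range (k + 1), ⨆ y ∈ Ball n, ‖iteratedFDeriv ℝ j u y‖

/-- Hölder norm of order `a` on the set `s`. -/
def holderNormOn (s : Set (E' n)) (a : ℝ) (u : E' n → F) : ℝ :=
  if a ≤ 0 then ⨆ y ∈ s, ‖u y‖
  else
    (⨆ z ∈ s, ⨆ w ∈ s,
        ‖iteratedFDeriv ℝ (⌈a⌉₊ - 1) u z - iteratedFDeriv ℝ (⌈a⌉₊ - 1) u w‖ /
          ‖z - w‖ ^ (a - ((⌈a⌉₊ : ℝ) - 1))) +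
      ⨆ y ∈ s, ‖u y‖

/-- Hölder norm of order `a` on the unit ball. -/
def holderNorm (a : ℝ) (u : E' n → F) : ℝ := holderNormOn (Ball n) a u

/-- Space-time norm `|||u|||_{a,k}`. -/
def stNorm (T : ℝ) (a : ℝ) (k : ℕ) (u : ℝ → E' n → F) : ℝ :=
  ⨆ t ∈ Icc (0:ℝ) T, ∑ j ∈ Finset.range (k + 1), holderNorm a fun y => Dts j u t y

/-- The defining property of the pressure `p = Ψ(x)`:
`Δp = −(∂_i V^k)(∂_k V^i)` in `Ω`, `p = 0` on `∂Ω`. -/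
def IsPressure (x v : E' n → E' n) (p : E' n → ℝ) : Prop :=
  ContDiff ℝ (⊤ : ℕ∞) p ∧ (∀ y ∈ Sphere' n, p y = 0) ∧
    ∀ y ∈ Ball n,
      lapl x p y = -∑ i, ∑ k, epd x i (fun z => v z k) y * epd x k (fun z => v z i) y

/-- The pressure, selected by choice. -/
def pressureFn (x v : E' n → E' n) : E' n → ℝ := Classical.epsilon (IsPressure x v)

/-- The Euler map `Φ(x)_i = D_t² x_i + ∂_i p`. -/
def eulerMap (x : ℝ → E' n → E' n) : ℝ → E' n → Fin n → ℝ := fun t y i =>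
  Dts 2 x t y i + epd (x t) i (pressureFn (x t) (Dt x t)) y

/-- First variational derivative `Φ'(x)δx`. -/
def eulerMap' (x δx : ℝ → E' n → E' n) : ℝ → E' n → Fin n → ℝ := fun t y i =>
  deriv (fun r : ℝ => eulerMap (fun s z => x s z + r • δx s z) t y i) 0

/-- Second variational derivative `Φ''(x)(δx, εx)`. -/
def eulerMap'' (x δx εx : ℝ → E' n → E' n) : ℝ → E' n → Fin n → ℝ := fun t y i =>
  deriv (fun r : ℝ =>
    deriv (fun s : ℝ => eulerMap (fun τ z => x τ z + r • δx τ z + s • εx τ z) t y i) 0) 0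

/-- Modified linearized operator `L₁ δx = Φ'(x)δx − δx^k ∂_k Φ^i + δx^i div Φ`. -/
def modLin (x δx : ℝ → E' n → E' n) : ℝ → E' n → Fin n → ℝ := fun t y i =>
  eulerMap' x δx t y i
    - (∑ k, δx t y k * epd (x t) k (fun z => eulerMap x t z i) y)
    + δx t y i * ∑ k, epd (x t) k (fun z => eulerMap x t z k) y


/-! With `A = ∂β` and `w = Aᵀ N`, the tangential term equals `|A|² - |w|²`, so only `|w|²`
has to be controlled. Since `|N| ≤ 1`, removing the normal component of each column leaves
`B = A - N wᵀ` with `|B|² ≤ |A|² - |w|²`. Then `w = B N + (N ⬝ w) N + (Aᵀ - A) N`, where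
`N ⬝ w = tr A - tr B`, and each of the three pieces is bounded by the tangential term, the
divergence or the curl. -/

section

variable {ι : Type*} [Fintype ι]

lemma dotProduct_mulVec_self_le (M : Matrix ι ι ℝ) {v : ι → ℝ} (hv : v ⬝ᵥ v ≤ 1) :
    (M *ᵥ v) ⬝ᵥ (M *ᵥ v) ≤ ∑ i, ∑ j, M i j ^ 2 := by
  refine Finset.sum_le_sum fun i _ => ?_
  calc (M *ᵥ v) i * (M *ᵥ v) i ≤ (∑ j, M i j ^ 2) * (v ⬝ᵥ v) := by
        simpa only [mulVec, dotProduct, ← sq] using Finset.sum_mul_sq_le_sq_mul_sq _ _ _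
    _ ≤ ∑ j, M i j ^ 2 := mul_le_of_le_one_right (by positivity) hv

lemma dotProduct_self_add_add_le (a b c : ι → ℝ) :
    (a + b + c) ⬝ᵥ (a + b + c) ≤ 3 * (a ⬝ᵥ a + b ⬝ᵥ b + c ⬝ᵥ c) := by
  simp only [dotProduct, ← Finset.sum_add_distrib, Finset.mul_sum, Pi.add_apply]
  exact Finset.sum_le_sum fun i _ => by
    nlinarith [sq_nonneg (a i - b i), sq_nonneg (b i - c i), sq_nonneg (a i - c i)]

lemma sq_trace_le_card_mul (B : Matrix ι ι ℝ) :
    trace B ^ 2 ≤ Fintype.card ι * ∑ i, ∑ j, B i j ^ 2 := calc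
  trace B ^ 2 ≤ Fintype.card ι * ∑ i, B i i ^ 2 := sq_sum_le_card_mul_sum_sq
  _ ≤ Fintype.card ι * ∑ i, ∑ j, B i j ^ 2 := by
    gcongr with i
    exact Finset.single_le_sum (f := fun j => B i j ^ 2) (fun j _ => sq_nonneg _)
      (Finset.mem_univ i)

lemma dotProduct_self_sub_smul_le {N : ι → ℝ} (hN : N ⬝ᵥ N ≤ 1) (v : ι → ℝ) :
    (v - (N ⬝ᵥ v) • N) ⬝ᵥ (v - (N ⬝ᵥ v) • N) ≤ v ⬝ᵥ v - (N ⬝ᵥ v) ^ 2 := by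
  simp only [dotProduct_sub, sub_dotProduct, dotProduct_smul, smul_dotProduct, smul_eq_mul,
    dotProduct_comm v N]
  nlinarith [sq_nonneg (N ⬝ᵥ v)]

lemma sum_sq_sub_vecMulVec_le {N : ι → ℝ} (hN : N ⬝ᵥ N ≤ 1) (A : Matrix ι ι ℝ) :
    ∑ i, ∑ j, (A - vecMulVec N (N ᵥ* A)) i j ^ 2 ≤
      ∑ i, ∑ j, A i j ^ 2 - (N ᵥ* A) ⬝ᵥ (N ᵥ* A) := by
  rw [Finset.sum_comm, Finset.sum_comm (f := fun i j => A i j ^ 2)]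
  simp only [dotProduct, ← Finset.sum_sub_distrib, ← sq]
  refine Finset.sum_le_sum fun j _ => ?_
  have := dotProduct_self_sub_smul_le hN (fun i => A i j)
  simpa [dotProduct, vecMul, vecMulVec_apply, sq, mul_comm] using this

theorem sum_sq_le_tangential_add_curl_add_trace {N : ι → ℝ} (hN : N ⬝ᵥ N ≤ 1)
    (A : Matrix ι ι ℝ) :
    ∑ i, ∑ j, A i j ^ 2 ≤ 6 * (Fintype.card ι + 1) *
      ((∑ i, ∑ j, A i j ^ 2 - (N ᵥ* A) ⬝ᵥ (N ᵥ* A)) + ∑ i, ∑ j, (A i j - A j i) ^ 2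
        + trace A ^ 2) := by
  set w := N ᵥ* A
  set B := A - vecMulVec N w
  set Q := ∑ i, ∑ j, A i j ^ 2 - w ⬝ᵥ w
  set curl := ∑ i, ∑ j, (A i j - A j i) ^ 2
  have hBQ : ∑ i, ∑ j, B i j ^ 2 ≤ Q := sum_sq_sub_vecMulVec_le hN A
  have hQ : 0 ≤ Q := le_trans (by positivity) hBQ
  have hcurl : ∑ i, ∑ j, (Aᵀ - A) i j ^ 2 = curl := Finset.sum_comm
  have hNw : N ⬝ᵥ w = trace A - trace B := by
    simp [B, trace_sub, trace_vecMulVec]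
  -- `w = Aᵀ N = A N + (Aᵀ - A) N`, and `A N = B N + (N ⬝ᵥ w) N`.
  have hw : w = B *ᵥ N + (N ⬝ᵥ w) • N + (Aᵀ - A) *ᵥ N := by
    simp only [B, sub_mulVec, vecMulVec_mulVec, mulVec_transpose, w, dotProduct_comm N]
    ext i; simp
  have hw2 : w ⬝ᵥ w ≤ 3 * (Q + (N ⬝ᵥ w) ^ 2 + curl) := by
    have hBN := dotProduct_mulVec_self_le B hN
    have hcurlN := dotProduct_mulVec_self_le (Aᵀ - A) hN
    have hNN : ((N ⬝ᵥ w) • N) ⬝ᵥ ((N ⬝ᵥ w) • N) ≤ (N ⬝ᵥ w) ^ 2 := by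
      simp only [dotProduct_smul, smul_dotProduct, smul_eq_mul]
      nlinarith [sq_nonneg (N ⬝ᵥ w)]
    calc w ⬝ᵥ w = _ := by rw [← hw]
      _ ≤ _ := dotProduct_self_add_add_le _ _ _
      _ ≤ 3 * (Q + (N ⬝ᵥ w) ^ 2 + curl) := by
        rw [hcurl] at hcurlN
        gcongr
        exact hBN.trans hBQ
  have hNw2 : (N ⬝ᵥ w) ^ 2 ≤ 2 * trace A ^ 2 + 2 * Fintype.card ι * Q := by
    have := sq_trace_le_card_mul B
    rw [hNw]
    nlinarith [sq_nonneg (trace A + trace B)]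
  have hcurl0 : 0 ≤ curl := by positivity
  have hcard : (0 : ℝ) ≤ Fintype.card ι := Nat.cast_nonneg _
  nlinarith [mul_nonneg hcard hcurl0, mul_nonneg hcard (sq_nonneg (trace A))]

lemma sum_tangentialForm_eq [DecidableEq ι] (N : ι → ℝ) (A : Matrix ι ι ℝ) :
    ∑ i, ∑ j, ∑ k, ∑ l, ((if k = l then (1 : ℝ) else 0) - N k * N l) *
        (if i = j then (1 : ℝ) else 0) * A k i * A l j =
      ∑ i, ∑ j, A i j ^ 2 - (N ᵥ* A) ⬝ᵥ (N ᵥ* A) := by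
  have hdiag : ∀ i, ∑ j, ∑ k, ∑ l, ((if k = l then (1 : ℝ) else 0) - N k * N l) *
      (if i = j then (1 : ℝ) else 0) * A k i * A l j =
      ∑ k, A k i ^ 2 - (N ᵥ* A) i ^ 2 := by
    intro i
    rw [Fintype.sum_eq_single i fun j hj => by simp [Ne.symm hj]]
    simp only [if_true, mul_one, sub_mul, Finset.sum_sub_distrib, ite_mul, one_mul, zero_mul,
      Finset.sum_ite_eq, Finset.mem_univ, vecMul, dotProduct, sq, Finset.sum_mul_sum]
    congr 1
    exact Fintype.sum_congr _ _ fun k => Fintype.sum_congr _ _ fun l => by ring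
  rw [Fintype.sum_congr _ _ hdiag, Finset.sum_sub_distrib, Finset.sum_comm]
  simp only [dotProduct, sq]

end

theorem stmt6_general (n : ℕ) :
    ∃ C > 0, ∀ U : Set (E' n), IsOpen U →
      ∀ β : E' n → Fin n → ℝ,
        (∀ j : Fin n, ∀ y ∈ U, DifferentiableAt ℝ (fun z => β z j) y) →
        ∀ N : Fin n → ℝ, (∑ i, (N i) ^ 2) ≤ 1 →
        ∀ y ∈ U,
          (∑ i, ∑ j, (pd i (fun z => β z j) y) ^ 2) ≤
            C * ((∑ i, ∑ j, ∑ k, ∑ l,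
                    ((if k = l then (1:ℝ) else 0) - N k * N l) *
                      (if i = j then (1:ℝ) else 0) *
                      pd k (fun z => β z i) y * pd l (fun z => β z j) y)
              + (∑ i, ∑ j, (pd i (fun z => β z j) y - pd j (fun z => β z i) y) ^ 2)
              + (∑ k, pd k (fun z => β z k) y) ^ 2) := by
  refine ⟨6 * (n + 1), by positivity, fun U _ β _ N hN y _ => ?_⟩
  have hN' : N ⬝ᵥ N ≤ 1 := by simpa only [dotProduct, sq] using hN
  set A : Matrix (Fin n) (Fin n) ℝ := Matrix.of fun i j => pd i (fun z => β z j) y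
  have hQ := sum_tangentialForm_eq N A
  have hest := sum_sq_le_tangential_add_curl_add_trace hN' A
  simp only [A, Matrix.of_apply, Matrix.trace, Matrix.diag_apply, Fintype.card_fin] at hQ hest
  rwa [hQ]

/-- pointwise estimate of the full gradient of a vector field by
tangential derivatives, curl and divergence (Lemma 5.1, estimate (5.1)). -/
theorem stmt6 (n : ℕ) (hn : 2 ≤ n) :
    ∃ C > 0, ∀ U : Set (E' n), IsOpen U →
      ∀ β : E' n → Fin n → ℝ,
        (∀ j : Fin n, ∀ y ∈ U, DifferentiableAt ℝ (fun z => β z j) y) →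
        ∀ N : Fin n → ℝ, (∑ i, (N i) ^ 2) ≤ 1 →
        ∀ y ∈ U,
          (∑ i, ∑ j, (pd i (fun z => β z j) y) ^ 2) ≤
            C * ((∑ i, ∑ j, ∑ k, ∑ l,
                    ((if k = l then (1:ℝ) else 0) - N k * N l) *
                      (if i = j then (1:ℝ) else 0) *
                      pd k (fun z => β z i) y * pd l (fun z => β z j) y)
              + (∑ i, ∑ j, (pd i (fun z => β z j) y - pd j (fun z => β z i) y) ^ 2)
              + (∑ k, pd k (fun z => β z k) y) ^ 2) :=
  stmt6_general n

end
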